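/- Let δ, σ, q > 0 and α, β ∈ (0,1) with α + β < 1. Define λ(θ) := qδ − ((2δ+σ²)/(2δ))^{1−α} · (2δα/(2δ+σ²(1−α))) · θ^{α+β−1}, θ̂ := ((2δ+σ²)/(2δ))^{(1−α)/(1−α−β)} · ( 2(α+β)/(q(2δ+σ²(1−α))) )^{1/(1−α−β)}, â := (2δ/(2δ+σ²)) θ̂, and for a > 0 let p_a be the probability measure on (0,∞) with density p_a(dx) = ((2δ+σ²)/σ²) a^{2δ/σ²+1} x^{−2δ/σ²−2} 1_{x ≥ a} dx. Then λ(θ̂) = β θ̂^{β−1} · ∫_{(0,∞)} x^α p_{â}(dx); that is, the function x ↦ β θ̂^{β−1} x^α − λ(θ̂) has mean zero under p_{â}. -/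

import Mathlib

open MeasureTheory Set

/-- The stationary distribution of a geometric Brownian motion with drift `-δ` and
volatility `σ`, reflected upwards à la Skorohod at the level `a`: the measure on `(0,∞)`
with density `((2δ+σ²)/σ²) · a^(2δ/σ²+1) · x^(-2δ/σ²-2) · 1_{x ≥ a}`. -/
noncomputable def reflectedStationary (δ σ a : ℝ) : Measure ℝ :=
  volume.withDensity fun x =>
    ENNReal.ofReal
      (if a ≤ x then ((2 * δ + σ ^ 2) / σ ^ 2) * a ^ (2 * δ / σ ^ 2 + 1)
          * x ^ (-(2 * δ / σ ^ 2) - 2) else 0)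

/-!
`p_a` is the Pareto law with scale `a` and shape `r = 2δ/σ² + 1`, so
`∫ x^s dp_a = r/(r-s) · a^s = (2δ+σ²)/(2δ+σ²(1-s)) · a^s`. With `K = (2δ+σ²)/(2δ)` and
`â = θ/K` this turns `β θ^(β-1) ∫ x^α dp_â` into `(2δβ/(2δ+σ²(1-α))) K^(1-α) θ^(α+β-1)`,
and the identity becomes `K^(1-α) θ̂^(α+β-1) = q(2δ+σ²(1-α))/(2(α+β))`: the first-order
condition that defines `θ̂`.
-/

open Real ProbabilityTheory
open scoped NNReal ENNReal

lemma rpow_div_mul_rpow_one_div_rpow {K c e : ℝ} (u : ℝ) (hK : 0 ≤ K) (hc : 0 ≤ c)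
    (he : e ≠ 0) : (K ^ (u / e) * c ^ (1 / e)) ^ e = K ^ u * c := by
  rw [mul_rpow (by positivity) (by positivity), ← rpow_mul hK, ← rpow_mul hc,
    div_mul_cancel₀ u he, one_div_mul_cancel he, rpow_one]

namespace ProbabilityTheory

variable {t r s : ℝ}

lemma paretoMeasure_eq_withDensity_toNNReal (t r : ℝ) :
    paretoMeasure t r = volume.withDensity fun x => ((paretoPDFReal t r x).toNNReal : ℝ≥0∞) :=
  rfl

lemma paretoPDFReal_toNNReal_smul_rpow (ht : 0 ≤ t) (hr : 0 ≤ r) :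
    (fun x => (paretoPDFReal t r x).toNNReal • x ^ s)
      = (Ici t).indicator fun x => r * t ^ r * (x ^ (-(r + 1)) * x ^ s) := by
  funext x
  rw [NNReal.smul_def, smul_eq_mul, Real.coe_toNNReal _ (paretoPDFReal_nonneg ht hr x)]
  unfold paretoPDFReal
  by_cases hx : t ≤ x
  · rw [if_pos hx, indicator_of_mem (mem_Ici.mpr hx)]; ring
  · rw [if_neg hx, indicator_of_notMem (by simpa using hx), zero_mul]

lemma rpow_neg_add_rpow_eqOn_Ioi (ht : 0 ≤ t) :
    EqOn (fun x : ℝ => x ^ (-(r + 1)) * x ^ s) (fun x => x ^ (s - r - 1)) (Ioi t) := by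
  intro x hx
  dsimp only
  rw [← rpow_add (ht.trans_lt hx)]
  ring_nf

lemma integrable_rpow_paretoMeasure (ht : 0 < t) (hr : 0 ≤ r) (hs : s < r) :
    Integrable (fun x : ℝ => x ^ s) (paretoMeasure t r) := by
  rw [paretoMeasure_eq_withDensity_toNNReal,
    integrable_withDensity_iff_integrable_smul (measurable_paretoPDFReal t r).real_toNNReal,
    paretoPDFReal_toNNReal_smul_rpow ht.le hr, integrable_indicator_iff measurableSet_Ici,
    IntegrableOn, Measure.restrict_congr_set Ioi_ae_eq_Ici.symm]
  have hIoi : IntegrableOn (fun x : ℝ => x ^ (s - r - 1)) (Ioi t) :=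
    integrableOn_Ioi_rpow_of_lt (by linarith) ht
  exact (hIoi.congr_fun (rpow_neg_add_rpow_eqOn_Ioi ht.le).symm measurableSet_Ioi).const_mul _

lemma integral_rpow_paretoMeasure (ht : 0 < t) (hr : 0 ≤ r) (hs : s < r) :
    ∫ x, x ^ s ∂(paretoMeasure t r) = r / (r - s) * t ^ s := by
  rw [paretoMeasure_eq_withDensity_toNNReal,
    integral_withDensity_eq_integral_smul (measurable_paretoPDFReal t r).real_toNNReal,
    paretoPDFReal_toNNReal_smul_rpow ht.le hr, integral_indicator measurableSet_Ici,
    integral_Ici_eq_integral_Ioi, integral_const_mul,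
    setIntegral_congr_fun measurableSet_Ioi (rpow_neg_add_rpow_eqOn_Ioi ht.le),
    integral_Ioi_rpow_of_lt (by linarith) ht]
  have hts : t ^ r * t ^ (s - r - 1 + 1) = t ^ s := by
    rw [← rpow_add ht]; ring_nf
  have hrs : r - s ≠ 0 := by linarith
  rw [← hts, show s - r - 1 + 1 = -(r - s) by ring]
  field_simp

end ProbabilityTheory

section ReflectedStationary

variable {δ σ a s : ℝ}

lemma reflectedStationary_eq_paretoMeasure (hσ : σ ≠ 0) :
    reflectedStationary δ σ a = paretoMeasure a (2 * δ / σ ^ 2 + 1) := by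
  rw [reflectedStationary, paretoMeasure]
  congr 1
  funext x
  rw [paretoPDF_eq, show -(2 * δ / σ ^ 2) - 2 = -((2 * δ / σ ^ 2 + 1) + 1) by ring,
    show (2 * δ + σ ^ 2) / σ ^ 2 = 2 * δ / σ ^ 2 + 1 by field_simp]

lemma isProbabilityMeasure_reflectedStationary (hδ : 0 ≤ δ) (hσ : σ ≠ 0) (ha : 0 < a) :
    IsProbabilityMeasure (reflectedStationary δ σ a) := by
  rw [reflectedStationary_eq_paretoMeasure hσ]
  exact isProbabilityMeasure_paretoMeasure ha (by positivity)

lemma lt_two_mul_div_sq_add_one_of_pos (hσ : σ ≠ 0) (hs : 0 < 2 * δ + σ ^ 2 * (1 - s)) :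
    s < 2 * δ / σ ^ 2 + 1 := by
  have hσ2 : 0 < σ ^ 2 := by positivity
  rw [← sub_pos, show 2 * δ / σ ^ 2 + 1 - s = (2 * δ + σ ^ 2 * (1 - s)) / σ ^ 2 by
    field_simp; ring]
  positivity

lemma integrable_rpow_reflectedStationary (hδ : 0 ≤ δ) (hσ : σ ≠ 0) (ha : 0 < a)
    (hs : 0 < 2 * δ + σ ^ 2 * (1 - s)) :
    Integrable (fun x : ℝ => x ^ s) (reflectedStationary δ σ a) := by
  rw [reflectedStationary_eq_paretoMeasure hσ]
  exact integrable_rpow_paretoMeasure ha (by positivity) (lt_two_mul_div_sq_add_one_of_pos hσ hs)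

lemma integral_rpow_reflectedStationary (hδ : 0 ≤ δ) (hσ : σ ≠ 0) (ha : 0 < a)
    (hs : 0 < 2 * δ + σ ^ 2 * (1 - s)) :
    ∫ x, x ^ s ∂(reflectedStationary δ σ a)
      = (2 * δ + σ ^ 2) / (2 * δ + σ ^ 2 * (1 - s)) * a ^ s := by
  rw [reflectedStationary_eq_paretoMeasure hσ,
    integral_rpow_paretoMeasure ha (by positivity) (lt_two_mul_div_sq_add_one_of_pos hσ hs)]
  have hσ2 : σ ^ 2 ≠ 0 := by positivity
  congr 1
  rw [div_add_one hσ2, div_sub' hσ2, div_div_div_cancel_right₀ hσ2]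
  ring_nf

end ReflectedStationary

lemma rpow_mul_integral_rpow_reflectedStationary {δ σ α β θ : ℝ} (hδ : 0 < δ) (hσ : σ ≠ 0)
    (hθ : 0 < θ) (hα : 0 < 2 * δ + σ ^ 2 * (1 - α)) :
    θ ^ (β - 1) * ∫ x, x ^ α ∂(reflectedStationary δ σ (2 * δ / (2 * δ + σ ^ 2) * θ))
      = 2 * δ / (2 * δ + σ ^ 2 * (1 - α))
        * (((2 * δ + σ ^ 2) / (2 * δ)) ^ (1 - α) * θ ^ (α + β - 1)) := by
  have hK : 0 < (2 * δ + σ ^ 2) / (2 * δ) := by positivity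
  rw [integral_rpow_reflectedStationary hδ.le hσ (by positivity) hα,
    mul_rpow (by positivity) hθ.le, show α + β - 1 = (β - 1) + α by ring, rpow_add hθ,
    rpow_sub hK, rpow_one, show 2 * δ / (2 * δ + σ ^ 2) = ((2 * δ + σ ^ 2) / (2 * δ))⁻¹ by
      rw [inv_div], inv_rpow hK.le]
  field_simp

theorem stmt_9_general (δ σ q α β : ℝ) (hδ : 0 < δ) (hσ : 0 < σ) (hq : 0 < q)
    (hα0 : 0 < α) (hβ0 : 0 < β) (hαβ : α + β < 1) :
    let lam : ℝ → ℝ := fun θ =>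
      q * δ - ((2 * δ + σ ^ 2) / (2 * δ)) ^ (1 - α) *
        (2 * δ * α / (2 * δ + σ ^ 2 * (1 - α))) * θ ^ (α + β - 1)
    let θhat : ℝ :=
      ((2 * δ + σ ^ 2) / (2 * δ)) ^ ((1 - α) / (1 - α - β)) *
        (2 * (α + β) / (q * (2 * δ + σ ^ 2 * (1 - α)))) ^ ((1 : ℝ) / (1 - α - β))
    let ahat : ℝ := (2 * δ / (2 * δ + σ ^ 2)) * θhat
    lam θhat = β * θhat ^ (β - 1) * ∫ x, x ^ α ∂(reflectedStationary δ σ ahat) ∧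
      ∫ x, (β * θhat ^ (β - 1) * x ^ α - lam θhat) ∂(reflectedStationary δ σ ahat) = 0 := by
  intro lam θhat ahat
  have h1α : 0 < 1 - α := by linarith
  have hB : 0 < 2 * δ + σ ^ 2 * (1 - α) := by positivity
  have hK : 0 < (2 * δ + σ ^ 2) / (2 * δ) := by positivity
  have hc : 0 < 2 * (α + β) / (q * (2 * δ + σ ^ 2 * (1 - α))) := by positivity
  have hθ : 0 < θhat := by positivity
  have hfoc : ((2 * δ + σ ^ 2) / (2 * δ)) ^ (1 - α) * θhat ^ (α + β - 1)
      = q * (2 * δ + σ ^ 2 * (1 - α)) / (2 * (α + β)) := by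
    rw [show α + β - 1 = -(1 - α - β) by ring, rpow_neg hθ.le,
      rpow_div_mul_rpow_one_div_rpow (1 - α) hK.le hc.le (by linarith)]
    field_simp
  have hcenter : lam θhat = β * θhat ^ (β - 1) * ∫ x, x ^ α ∂(reflectedStationary δ σ ahat) := by
    rw [mul_assoc, rpow_mul_integral_rpow_reflectedStationary hδ hσ.ne' hθ hB, hfoc]
    change q * δ - _ * _ * θhat ^ (α + β - 1) = _
    rw [mul_comm _ (2 * δ * α / _), mul_assoc, hfoc]
    field_simp
    ring
  refine ⟨hcenter, ?_⟩
  have ha : 0 < ahat := by positivity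
  have := isProbabilityMeasure_reflectedStationary hδ.le hσ.ne' ha
  have hint := integrable_rpow_reflectedStationary hδ.le hσ.ne' ha hB
  rw [integral_sub (hint.const_mul _) (integrable_const _), integral_const_mul, integral_const,
    probReal_univ, one_smul, hcenter, sub_self]

theorem stmt_9 (δ σ q α β : ℝ) (hδ : 0 < δ) (hσ : 0 < σ) (hq : 0 < q)
    (hα0 : 0 < α) (hα1 : α < 1) (hβ0 : 0 < β) (hβ1 : β < 1) (hαβ : α + β < 1) :
    let lam : ℝ → ℝ := fun θ =>
      q * δ - ((2 * δ + σ ^ 2) / (2 * δ)) ^ (1 - α) *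
        (2 * δ * α / (2 * δ + σ ^ 2 * (1 - α))) * θ ^ (α + β - 1)
    let θhat : ℝ :=
      ((2 * δ + σ ^ 2) / (2 * δ)) ^ ((1 - α) / (1 - α - β)) *
        (2 * (α + β) / (q * (2 * δ + σ ^ 2 * (1 - α)))) ^ ((1 : ℝ) / (1 - α - β))
    let ahat : ℝ := (2 * δ / (2 * δ + σ ^ 2)) * θhat
    lam θhat = β * θhat ^ (β - 1) * ∫ x, x ^ α ∂(reflectedStationary δ σ ahat) ∧
      ∫ x, (β * θhat ^ (β - 1) * x ^ α - lam θhat) ∂(reflectedStationary δ σ ahat) = 0 :=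
  stmt_9_general δ σ q α β hδ hσ hq hα0 hβ0 hαβ
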